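/- Every real 3×N matrix with unit-norm columns (N ≥ 2) has worst-case coherence μ ≥ 1 − 4/N + 2/N². -/

import Mathlib

/-!
Write `c = 1 - 1/N`, so that `2c² - 1 = 1 - 4/N + 2/N²`. If all off-diagonal coherences were
below `2c² - 1`, the `2N` unit vectors `±φᵢ` would have pairwise angles larger than
`2 arccos c`, so by the triangle inequality for angles the spherical sectors of half-angle
`arccos c` around them would overlap only at the origin. Each such sector of the unit ball of `ℝ³`
has volume `2π(1 - c)/3` (Archimedes), so packing them into the ball gives `2N(1 - c) ≤ 2`;
since the hypothesis is strict, the same holds for a slightly smaller `c`, giving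
`2N(1 - c) < 2`, which contradicts `N(1 - c) = 1`.
-/

open MeasureTheory Real InnerProductGeometry Filter Topology Function
open scoped RealInnerProductSpace

section InnerProductSpace

variable {E : Type*} [NormedAddCommGroup E] [InnerProductSpace ℝ E]

lemma angle_le_arccos_of_mul_norm_le_inner {u x : E} (hu : ‖u‖ = 1) (hx : x ≠ 0) {c : ℝ}
    (h : c * ‖x‖ ≤ ⟪u, x⟫) : angle u x ≤ arccos c := by
  refine arccos_le_arccos ?_
  rwa [hu, one_mul, le_div_iff₀ (norm_pos_iff.2 hx)]

lemma two_mul_sq_sub_one_le_inner {u v x : E} (hu : ‖u‖ = 1) (hv : ‖v‖ = 1) (hx : x ≠ 0)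
    {c : ℝ} (hc : 0 ≤ c) (hux : c * ‖x‖ ≤ ⟪u, x⟫) (hvx : c * ‖x‖ ≤ ⟪v, x⟫) :
    2 * c ^ 2 - 1 ≤ ⟪u, v⟫ := by
  have hc1 : c ≤ 1 := by
    have := hux.trans (real_inner_le_norm u x)
    rw [hu, one_mul] at this
    exact le_of_mul_le_mul_right (by linarith) (norm_pos_iff.2 hx)
  have hangle : angle u v ≤ 2 * arccos c := calc
    angle u v ≤ angle u x + angle x v := angle_le_angle_add_angle u x v
    _ ≤ arccos c + arccos c := by
      rw [angle_comm x v]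
      exact add_le_add (angle_le_arccos_of_mul_norm_le_inner hu hx hux)
        (angle_le_arccos_of_mul_norm_le_inner hv hx hvx)
    _ = 2 * arccos c := by ring
  have hπ : 2 * arccos c ≤ π := by linarith [arccos_le_pi_div_two.2 hc]
  calc 2 * c ^ 2 - 1 = cos (2 * arccos c) := by rw [cos_two_mul, cos_arccos (by linarith) hc1]
    _ ≤ cos (angle u v) := cos_le_cos_of_nonneg_of_le_pi (angle_nonneg u v) hπ hangle
    _ = ⟪u, v⟫ := by rw [cos_angle, hu, hv, one_mul, div_one]

lemma inner_units_smul_lt {ι : Type*} {φ : ι → E} (hφ : ∀ i, ‖φ i‖ = 1) {t : ℝ} (ht : -1 < t)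
    (h : Pairwise fun i j => |⟪φ i, φ j⟫| < t) :
    Pairwise fun p q : ℤˣ × ι => ⟪((p.1 : ℤ) : ℝ) • φ p.2, ((q.1 : ℤ) : ℝ) • φ q.2⟫ < t := by
  rintro ⟨s, i⟩ ⟨s', j⟩ hne
  rcases eq_or_ne i j with rfl | hij
  · rcases Int.units_eq_one_or s with rfl | rfl <;> rcases Int.units_eq_one_or s' with rfl | rfl <;>
      simp_all
  · have := abs_lt.1 (h hij)
    rcases Int.units_eq_one_or s with rfl | rfl <;> rcases Int.units_eq_one_or s' with rfl | rfl <;>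
      simp <;> linarith

def sphericalSector (v : E) (c : ℝ) : Set E := {x | ‖x‖ ≤ 1 ∧ c * ‖x‖ ≤ ⟪v, x⟫}

lemma isClosed_sphericalSector (v : E) (c : ℝ) : IsClosed (sphericalSector v c) :=
  (isClosed_le continuous_norm continuous_const).inter
    (isClosed_le (continuous_const.mul continuous_norm) (continuous_const.inner continuous_id))

lemma sphericalSector_subset_closedBall (v : E) (c : ℝ) :
    sphericalSector v c ⊆ Metric.closedBall 0 1 :=
  fun _ hx => mem_closedBall_zero_iff.2 hx.1

lemma sphericalSector_inter_subset {u v : E} (hu : ‖u‖ = 1) (hv : ‖v‖ = 1) {c : ℝ} (hc : 0 ≤ c)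
    (huv : ⟪u, v⟫ < 2 * c ^ 2 - 1) : sphericalSector u c ∩ sphericalSector v c ⊆ {0} := by
  rintro x ⟨⟨-, hux⟩, ⟨-, hvx⟩⟩
  by_contra hx
  exact huv.not_ge (two_mul_sq_sub_one_le_inner hu hv hx hc hux hvx)

lemma LinearIsometryEquiv.preimage_sphericalSector {F : Type*} [NormedAddCommGroup F]
    [InnerProductSpace ℝ F] (f : E ≃ₗᵢ[ℝ] F) (v : F) (c : ℝ) :
    f ⁻¹' sphericalSector v c = sphericalSector (f.symm v) c := by
  ext x
  simp only [sphericalSector, Set.mem_preimage, Set.mem_ofPred_eq, f.norm_map]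
  rw [← f.inner_map_map, f.apply_symm_apply]

lemma volume_sphericalSector_eq_of_norm_eq [FiniteDimensional ℝ E] [MeasurableSpace E]
    [BorelSpace E] {u v : E} (h : ‖u‖ = ‖v‖) (c : ℝ) :
    volume (sphericalSector u c) = volume (sphericalSector v c) := by
  set f := Submodule.reflection (ℝ ∙ (u - v))ᗮ
  have hfu : f.symm v = u := f.symm_apply_eq.2 (Submodule.reflection_sub h).symm
  rw [← hfu, ← f.preimage_sphericalSector,
    f.measurePreserving.measure_preimage (isClosed_sphericalSector v c).nullMeasurableSet]

end InnerProductSpace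

lemma EuclideanSpace.measurePreserving_fst_tail (n : ℕ) :
    MeasurePreserving (fun x : EuclideanSpace ℝ (Fin (n + 1)) =>
      (x 0, (WithLp.toLp 2 (Fin.tail x.ofLp) : EuclideanSpace ℝ (Fin n)))) := by
  have h := ((MeasurePreserving.id volume).prod (PiLp.volume_preserving_toLp (Fin n))).comp
    ((volume_preserving_piFinSuccAbove (fun _ : Fin (n + 1) => ℝ) 0).comp
      (PiLp.volume_preserving_ofLp (Fin (n + 1))))
  convert h using 1
  · ext x <;> simp [Fin.tail]
  · exact Measure.volume_eq_prod _ _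

lemma EuclideanSpace.norm_sq_eq_fst_add_tail {n : ℕ} (x : EuclideanSpace ℝ (Fin (n + 1))) :
    ‖x‖ ^ 2 = x 0 ^ 2 + ‖(WithLp.toLp 2 (Fin.tail x.ofLp) : EuclideanSpace ℝ (Fin n))‖ ^ 2 := by
  simp [EuclideanSpace.norm_sq_eq, Fin.sum_univ_succ, Fin.tail]

lemma volume_setOf_norm_sq_le (m : ℝ) :
    volume {y : EuclideanSpace ℝ (Fin 2) | ‖y‖ ^ 2 ≤ m} = ENNReal.ofReal (π * m) := by
  rcases lt_or_ge m 0 with hm | hm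
  · have : {y : EuclideanSpace ℝ (Fin 2) | ‖y‖ ^ 2 ≤ m} = ∅ :=
      Set.eq_empty_of_forall_notMem fun y hy => hm.not_ge ((sq_nonneg _).trans hy)
    rw [this, measure_empty, ENNReal.ofReal_of_nonpos (by nlinarith [pi_pos])]
  · have : {y : EuclideanSpace ℝ (Fin 2) | ‖y‖ ^ 2 ≤ m} = Metric.closedBall 0 √m := by
      ext y
      rw [mem_closedBall_zero_iff, Real.le_sqrt (norm_nonneg y) hm, Set.mem_ofPred_eq]
    rw [this, EuclideanSpace.volume_closedBall_fin_two, ← ENNReal.ofReal_pow (sqrt_nonneg m),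
      sq_sqrt hm, ← ENNReal.ofReal_mul hm, mul_comm]

lemma integral_min_one_sub_sq {c : ℝ} (hc0 : 0 < c) (hc1 : c < 1) :
    ∫ z in (0 : ℝ)..1, min (1 - z ^ 2) ((1 - c ^ 2) / c ^ 2 * z ^ 2) = 2 * (1 - c) / 3 := by
  have hcont : Continuous fun z : ℝ => min (1 - z ^ 2) ((1 - c ^ 2) / c ^ 2 * z ^ 2) := by
    fun_prop
  have hdiff (z : ℝ) : (1 - c ^ 2) / c ^ 2 * z ^ 2 - (1 - z ^ 2) = (z ^ 2 - c ^ 2) / c ^ 2 := by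
    field_simp
    ring
  have hcone : ∫ z in (0 : ℝ)..c, min (1 - z ^ 2) ((1 - c ^ 2) / c ^ 2 * z ^ 2)
      = ∫ z in (0 : ℝ)..c, (1 - c ^ 2) / c ^ 2 * z ^ 2 := by
    refine intervalIntegral.integral_congr fun z hz => min_eq_right ?_
    rw [Set.uIcc_of_le hc0.le] at hz
    have : (z ^ 2 - c ^ 2) / c ^ 2 ≤ 0 :=
      div_nonpos_of_nonpos_of_nonneg (by nlinarith [hz.1, hz.2]) (sq_nonneg c)
    linarith [hdiff z]
  have hcap : ∫ z in c..1, min (1 - z ^ 2) ((1 - c ^ 2) / c ^ 2 * z ^ 2)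
      = ∫ z in c..1, (1 - z ^ 2) := by
    refine intervalIntegral.integral_congr fun z hz => min_eq_left ?_
    rw [Set.uIcc_of_le hc1.le] at hz
    have : 0 ≤ (z ^ 2 - c ^ 2) / c ^ 2 := div_nonneg (by nlinarith [hz.1]) (sq_nonneg c)
    linarith [hdiff z]
  rw [← intervalIntegral.integral_add_adjacent_intervals (hcont.intervalIntegrable 0 c)
    (hcont.intervalIntegrable c 1), hcone, hcap, intervalIntegral.integral_const_mul,
    intervalIntegral.integral_sub intervalIntegrable_const
      ((continuous_pow 2).intervalIntegrable _ _),
    integral_pow, integral_pow, intervalIntegral.integral_const]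
  field_simp
  ring

/-- The sector of half-angle `arccos c` around the first coordinate axis, in the coordinates
`(x 0, Fin.tail x)`. -/
def axialSectorCoords (n : ℕ) (c : ℝ) : Set (ℝ × EuclideanSpace ℝ (Fin n)) :=
  {p | 0 ≤ p.1 ∧ p.1 ^ 2 + ‖p.2‖ ^ 2 ≤ 1 ∧ c ^ 2 * (p.1 ^ 2 + ‖p.2‖ ^ 2) ≤ p.1 ^ 2}

lemma measurableSet_axialSectorCoords (n : ℕ) (c : ℝ) :
    MeasurableSet (axialSectorCoords n c) := by
  simp only [axialSectorCoords, Set.ofPred_and]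
  refine IsClosed.measurableSet ((isClosed_le ?_ ?_).inter ((isClosed_le ?_ ?_).inter
    (isClosed_le ?_ ?_))) <;> fun_prop

lemma sphericalSector_single_zero {n : ℕ} {c : ℝ} (hc : 0 ≤ c) :
    sphericalSector (EuclideanSpace.single (0 : Fin (n + 1)) (1 : ℝ)) c =
      (fun x : EuclideanSpace ℝ (Fin (n + 1)) => (x 0, WithLp.toLp 2 (Fin.tail x.ofLp))) ⁻¹'
        axialSectorCoords n c := by
  ext x
  simp only [sphericalSector, axialSectorCoords, Set.mem_ofPred_eq, Set.mem_preimage,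
    EuclideanSpace.inner_single_left, map_one, one_mul, ← EuclideanSpace.norm_sq_eq_fst_add_tail]
  rw [← sq_le_one_iff₀ (norm_nonneg x), ← mul_pow]
  have hcx : 0 ≤ c * ‖x‖ := by positivity
  constructor
  · rintro ⟨h1, h2⟩
    exact ⟨hcx.trans h2, h1, pow_le_pow_left₀ hcx h2 2⟩
  · rintro ⟨h0, h1, h2⟩
    exact ⟨h1, (sq_le_sq₀ hcx h0).1 h2⟩

lemma volume_prodMk_axialSectorCoords {c : ℝ} (hc : 0 < c) (z : ℝ) :
    volume (Prod.mk z ⁻¹' axialSectorCoords 2 c) = (Set.Icc 0 1).indicator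
      (fun z => ENNReal.ofReal (π * min (1 - z ^ 2) ((1 - c ^ 2) / c ^ 2 * z ^ 2))) z := by
  rcases lt_or_ge z 0 with hz | hz
  · have : Prod.mk z ⁻¹' axialSectorCoords 2 c = ∅ :=
      Set.eq_empty_of_forall_notMem fun y hy => hz.not_ge hy.1
    rw [this, measure_empty, Set.indicator_of_notMem fun h => hz.not_ge h.1]
  have hslice : Prod.mk z ⁻¹' axialSectorCoords 2 c =
      {y | ‖y‖ ^ 2 ≤ min (1 - z ^ 2) ((1 - c ^ 2) / c ^ 2 * z ^ 2)} := by
    ext y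
    simp only [axialSectorCoords, Set.mem_preimage, Set.mem_ofPred_eq, le_min_iff,
      le_div_iff₀ (by positivity : (0 : ℝ) < c ^ 2), div_mul_eq_mul_div]
    constructor
    · rintro ⟨-, h1, h2⟩
      constructor <;> nlinarith
    · rintro ⟨h1, h2⟩
      exact ⟨hz, by linarith, by nlinarith⟩
  rw [hslice, volume_setOf_norm_sq_le]
  rcases le_or_gt z 1 with hz1 | hz1
  · rw [Set.indicator_of_mem (Set.mem_Icc.2 ⟨hz, hz1⟩)]
  · rw [Set.indicator_of_notMem fun h => hz1.not_ge h.2, ENNReal.ofReal_of_nonpos]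
    exact mul_nonpos_of_nonneg_of_nonpos pi_pos.le ((min_le_left _ _).trans (by nlinarith))

lemma volume_sphericalSector_single_zero {c : ℝ} (hc0 : 0 < c) (hc1 : c < 1) :
    volume (sphericalSector (EuclideanSpace.single (0 : Fin 3) (1 : ℝ)) c) =
      ENNReal.ofReal (2 * π / 3 * (1 - c)) := by
  have hA := measurableSet_axialSectorCoords 2 c
  have hnonneg : 0 ≤ᵐ[volume.restrict (Set.Icc 0 1)]
      fun z : ℝ => π * min (1 - z ^ 2) ((1 - c ^ 2) / c ^ 2 * z ^ 2) := by
    refine (ae_restrict_mem measurableSet_Icc).mono fun z hz => ?_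
    have : z ^ 2 ≤ 1 := by nlinarith [hz.1, hz.2]
    exact mul_nonneg pi_pos.le (le_min (by linarith)
      (mul_nonneg (div_nonneg (by nlinarith) (sq_nonneg c)) (sq_nonneg z)))
  rw [sphericalSector_single_zero hc0.le,
    (EuclideanSpace.measurePreserving_fst_tail 2).measure_preimage hA.nullMeasurableSet,
    Measure.volume_eq_prod, Measure.prod_apply hA,
    lintegral_congr (volume_prodMk_axialSectorCoords hc0), lintegral_indicator measurableSet_Icc,
    ← ofReal_integral_eq_lintegral_ofReal (Continuous.integrableOn_Icc (by fun_prop)) hnonneg,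
    integral_Icc_eq_integral_Ioc, ← intervalIntegral.integral_of_le zero_le_one,
    intervalIntegral.integral_const_mul, integral_min_one_sub_sq hc0 hc1]
  congr 1
  ring

lemma volume_sphericalSector {v : EuclideanSpace ℝ (Fin 3)} (hv : ‖v‖ = 1) {c : ℝ} (hc0 : 0 < c)
    (hc1 : c < 1) : volume (sphericalSector v c) = ENNReal.ofReal (2 * π / 3 * (1 - c)) := by
  rw [volume_sphericalSector_eq_of_norm_eq (v := EuclideanSpace.single 0 1) (by simp [hv]),
    volume_sphericalSector_single_zero hc0 hc1]

lemma card_mul_one_sub_le_two {ι : Type*} [Fintype ι] {u : ι → EuclideanSpace ℝ (Fin 3)}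
    (hu : ∀ i, ‖u i‖ = 1) {c : ℝ} (hc0 : 0 < c) (hc1 : c < 1)
    (h : Pairwise fun i j => ⟪u i, u j⟫ < 2 * c ^ 2 - 1) : Fintype.card ι * (1 - c) ≤ 2 := by
  have hdisj : Pairwise (AEDisjoint volume on fun i => sphericalSector (u i) c) :=
    fun i j hij => measure_mono_null
      (sphericalSector_inter_subset (hu i) (hu j) hc0.le (h hij)) (measure_singleton 0)
  have hle := (tsum_meas_le_meas_iUnion_of_disjoint₀ volume
    (fun i => (isClosed_sphericalSector (u i) c).measurableSet.nullMeasurableSet) hdisj).trans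
    (measure_mono (Set.iUnion_subset fun i => sphericalSector_subset_closedBall (u i) c))
  simp only [tsum_fintype, volume_sphericalSector (hu _) hc0 hc1, Finset.sum_const,
    Finset.card_univ, nsmul_eq_mul, EuclideanSpace.volume_closedBall_fin_three] at hle
  rw [← ENNReal.ofReal_natCast, ← ENNReal.ofReal_mul (Nat.cast_nonneg _), ENNReal.ofReal_one,
    one_pow, one_mul, ENNReal.ofReal_le_ofReal_iff (by positivity)] at hle
  nlinarith [pi_pos]

lemma card_mul_one_sub_lt_two {ι : Type*} [Fintype ι] {u : ι → EuclideanSpace ℝ (Fin 3)}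
    (hu : ∀ i, ‖u i‖ = 1) {c : ℝ} (hc0 : 0 < c) (hc1 : c < 1)
    (h : Pairwise fun i j => ⟪u i, u j⟫ < 2 * c ^ 2 - 1) : Fintype.card ι * (1 - c) < 2 := by
  have hpair : ∀ᶠ c' in 𝓝 c, Pairwise fun i j => ⟪u i, u j⟫ < 2 * c' ^ 2 - 1 := by
    simp only [Pairwise, eventually_all]
    exact fun i j hij => ((by fun_prop : Continuous fun c' : ℝ => 2 * c' ^ 2 - 1).tendsto c
      ).eventually_const_lt (h hij)
  have hev := Eventually.and (Ioo_mem_nhdsLT hc0) (nhdsWithin_le_nhds hpair)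
  obtain ⟨c', ⟨hc'0, hc'c⟩, hc'⟩ := hev.exists
  rcases (Fintype.card ι).eq_zero_or_pos with hcard | hcard
  · simp [hcard]
  · calc (Fintype.card ι : ℝ) * (1 - c) < Fintype.card ι * (1 - c') :=
          mul_lt_mul_of_pos_left (by linarith) (by exact_mod_cast hcard)
      _ ≤ 2 := card_mul_one_sub_le_two hu hc'0 (hc'c.trans hc1) hc'

/-- Every real `3 × N` matrix with unit-norm columns (`N ≥ 2`) has
worst-case coherence `μ ≥ 1 − 4/N + 2/N²`. -/
theorem stmt_10 (N : ℕ) (hN : 2 ≤ N) (Φ : Matrix (Fin 3) (Fin N) ℝ)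
    (hunit : ∀ n : Fin N, ∑ m : Fin 3, Φ m n ^ 2 = 1) :
    ∃ i j : Fin N, i ≠ j ∧
      1 - 4 / (N : ℝ) + 2 / (N : ℝ) ^ 2 ≤ |∑ m : Fin 3, Φ m i * Φ m j| := by
  have hN' : (2 : ℝ) ≤ N := by exact_mod_cast hN
  set c : ℝ := 1 - 1 / N with hc
  have hc0 : 0 < c := by rw [hc, sub_pos, div_lt_one (by linarith)]; linarith
  have hc1 : c < 1 := by rw [hc]; simp only [sub_lt_self_iff, one_div, inv_pos]; linarith
  have hbound : 1 - 4 / (N : ℝ) + 2 / (N : ℝ) ^ 2 = 2 * c ^ 2 - 1 := by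
    rw [hc]
    field_simp
    ring
  let φ : Fin N → EuclideanSpace ℝ (Fin 3) := fun i => WithLp.toLp 2 (fun m => Φ m i)
  have hφ (i : Fin N) : ‖φ i‖ = 1 := by
    simp [φ, EuclideanSpace.norm_eq, hunit]
  have hinner (i j : Fin N) : ⟪φ i, φ j⟫ = ∑ m, Φ m i * Φ m j := by
    simp [φ, PiLp.inner_apply, mul_comm]
  by_contra! hsmall
  have hpack := card_mul_one_sub_lt_two (u := fun p : ℤˣ × Fin N => ((p.1 : ℤ) : ℝ) • φ p.2)
    (fun ⟨s, i⟩ => by rcases Int.units_eq_one_or s with rfl | rfl <;> simp [hφ]) hc0 hc1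
    (inner_units_smul_lt hφ (by nlinarith) fun i j hij => by
      simpa only [hinner, ← hbound] using hsmall i j hij)
  have hcard : Fintype.card (ℤˣ × Fin N) = 2 * N := by simp
  rw [hcard, hc, sub_sub_cancel] at hpack
  field_simp at hpack
  push_cast at hpack
  linarith
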